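/- Let a, b, c, x, y be complex numbers with a, b, c pairwise distinct, and suppose the point X (affix x) lies strictly inside triangle ABC (i.e., x is a strictly positive convex combination of a, b, c) and y is the isogonal conjugate of x, meaning all three numbers (x-a)(y-a)/((b-a)(c-a)), (x-b)(y-b)/((a-b)(c-b)), (x-c)(y-c)/((a-c)(b-c)) are positive reals. Then |(x-a)(y-a)|·|b-c| + |(x-b)(y-b)|·|c-a| + |(x-c)(y-c)|·|a-b| equals |b-a|·|c-a|·|b-c| (i.e., equality a·AX·AY + b·BX·BY + c·CX·CY = abc holds). -/

import Mathlib

/-!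
The three quotients are the Lagrange coefficients of the monic quadratic `(t - x) (t - y)` at the
nodes `a, b, c`, so they sum to its leading coefficient `1`. Since each quotient is a positive real
`r`, the norm of its numerator is `r` times the norm of its denominator, and multiplying
`r₁ + r₂ + r₃ = 1` by `|b - a| |c - a| |b - c|` gives the identity.
-/

theorem lagrange_quotients_sum_eq_one {K : Type*} [Field K] {a b c : K}
    (hab : a ≠ b) (hac : a ≠ c) (hbc : b ≠ c) (x y : K) :
    (x - a) * (y - a) / ((b - a) * (c - a)) + (x - b) * (y - b) / ((a - b) * (c - b)) +
      (x - c) * (y - c) / ((a - c) * (b - c)) = 1 := by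
  have hba : b - a ≠ 0 := sub_ne_zero.mpr hab.symm
  have hca : c - a ≠ 0 := sub_ne_zero.mpr hac.symm
  have hcb : c - b ≠ 0 := sub_ne_zero.mpr hbc.symm
  field_simp
  ring

theorem Complex.norm_eq_mul_norm_of_div_eq_ofReal {z w : ℂ} {r : ℝ} (hw : w ≠ 0) (hr : 0 ≤ r)
    (h : z / w = r) : ‖z‖ = r * ‖w‖ := by
  rw [(div_eq_iff hw).mp h, norm_mul, Complex.norm_real, Real.norm_of_nonneg hr]

theorem stmt_14_general (a b c x y : ℂ) (hab : a ≠ b) (hac : a ≠ c) (hbc : b ≠ c)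
    (h1 : ∃ r : ℝ, 0 < r ∧ (x - a) * (y - a) / ((b - a) * (c - a)) = (r : ℂ))
    (h2 : ∃ r : ℝ, 0 < r ∧ (x - b) * (y - b) / ((a - b) * (c - b)) = (r : ℂ))
    (h3 : ∃ r : ℝ, 0 < r ∧ (x - c) * (y - c) / ((a - c) * (b - c)) = (r : ℂ)) :
    ‖(x - a) * (y - a)‖ * ‖b - c‖ +
    ‖(x - b) * (y - b)‖ * ‖c - a‖ +
    ‖(x - c) * (y - c)‖ * ‖a - b‖ =
      ‖b - a‖ * ‖c - a‖ * ‖b - c‖ := by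
  obtain ⟨r₁, hr₁, e₁⟩ := h1
  obtain ⟨r₂, hr₂, e₂⟩ := h2
  obtain ⟨r₃, hr₃, e₃⟩ := h3
  have hsum : r₁ + r₂ + r₃ = 1 := by
    have := lagrange_quotients_sum_eq_one hab hac hbc x y
    rw [e₁, e₂, e₃] at this
    exact_mod_cast this
  have ne {p q : ℂ} (h : p ≠ q) : p - q ≠ 0 := sub_ne_zero.mpr h
  rw [Complex.norm_eq_mul_norm_of_div_eq_ofReal (mul_ne_zero (ne hab.symm) (ne hac.symm)) hr₁.le e₁,
    Complex.norm_eq_mul_norm_of_div_eq_ofReal (mul_ne_zero (ne hab) (ne hbc.symm)) hr₂.le e₂,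
    Complex.norm_eq_mul_norm_of_div_eq_ofReal (mul_ne_zero (ne hac) (ne hbc)) hr₃.le e₃]
  simp only [norm_mul, norm_sub_rev a b, norm_sub_rev a c, norm_sub_rev c b]
  linear_combination (‖b - a‖ * ‖c - a‖ * ‖b - c‖) * hsum

theorem stmt_14 (a b c x y : ℂ) (hab : a ≠ b) (hac : a ≠ c) (hbc : b ≠ c)
    (hx : ∃ u v w : ℝ, 0 < u ∧ 0 < v ∧ 0 < w ∧ u + v + w = 1 ∧
      x = (u : ℂ) * a + (v : ℂ) * b + (w : ℂ) * c)
    (h1 : ∃ r : ℝ, 0 < r ∧ (x - a) * (y - a) / ((b - a) * (c - a)) = (r : ℂ))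
    (h2 : ∃ r : ℝ, 0 < r ∧ (x - b) * (y - b) / ((a - b) * (c - b)) = (r : ℂ))
    (h3 : ∃ r : ℝ, 0 < r ∧ (x - c) * (y - c) / ((a - c) * (b - c)) = (r : ℂ)) :
    ‖(x - a) * (y - a)‖ * ‖b - c‖ +
    ‖(x - b) * (y - b)‖ * ‖c - a‖ +
    ‖(x - c) * (y - c)‖ * ‖a - b‖ =
      ‖b - a‖ * ‖c - a‖ * ‖b - c‖ :=
  stmt_14_general a b c x y hab hac hbc h1 h2 h3
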